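/- arXiv:2410.17872 — 2 statements merged into one kernel-verified Lean document; each statement's English description precedes it below -/
import Mathlib

section
/- For every (A,b) ∈ LTA(n,2)_{h2}^{h1} and every f ∈ O_{h1}∖O_{h2}∖D, the coefficient ⟨(A,b)·h1⟩_f equals the corresponding free parameter of the group element: it equals b_r if h1 = f·x_r, and it equals a_{s,t} if h1 = q·x_s and f = q·x_t with t < s. -/
open Finset

/-! Common setup: `R_n = F_2[x_0,…,x_{n−1}]/(x_i^2 − x_i)`.  A (squarefree) monomial is
identified with its index set `ind(g) ⊆ {0,…,n−1}`.  Reduced elements of `R_n` are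
identified, via the (bijective) evaluation map `ev`, with Boolean functions
`F_2^n → F_2`, i.e. with vectors in `F_2^N` indexed by the points of `F_2^n`. -/

/-- Monomials of `M_n`, identified with their index sets. -/
abbrev Mon (n : ℕ) := Finset (Fin n)

/-- Points of `F_2^n`. -/
abbrev Pt (n : ℕ) := Fin n → ZMod 2

/-- Elements of `R_n` (equivalently, vectors of `F_2^N`), identified with Boolean
functions via the evaluation map `ev`. -/
abbrev BF (n : ℕ) := Pt n → ZMod 2

variable {n : ℕ}

/-- `ev` of the monomial `∏_{i ∈ S} x_i`. -/
def evm (S : Mon n) : BF n := fun x => ∏ i ∈ S, x i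

/-- The coefficient `⟨f⟩_S` of the monomial `S` in the reduced polynomial represented by
the Boolean function `f` (binary Möbius inversion: `⟨f⟩_S = ∑_{supp x ⊆ S} f(x)`). -/
def mcoeff (f : BF n) (S : Mon n) : ZMod 2 :=
  ∑ x ∈ Finset.univ.filter (fun x : Pt n => ∀ i ∉ S, x i = 0), f x

/-- The row index `[g] = ∑_{i ∉ ind(g)} 2^i` of a monomial. -/
def rowIdx (S : Mon n) : ℕ := ∑ i ∈ Sᶜ, 2 ^ (i : ℕ)

/-- `Ovd h g` means `h ≺_o g`: `h` is a one-variable descendant of `g`, i.e. `g = h·x_i`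
for some `i ∉ ind(h)`, or `g = q·x_i`, `h = q·x_j` for a monomial `q` and `j < i`. -/
def Ovd (h g : Mon n) : Prop :=
  (∃ i ∉ h, g = insert i h) ∨
  (∃ (q : Mon n) (i j : Fin n), i ∉ q ∧ j ∉ q ∧ j < i ∧ g = insert i q ∧ h = insert j q)

/-- The standard partial order `≼` on monomials: `g ≼ h` iff some divisor `h'` of `h` with
`deg h' = deg g` dominates `g` coordinatewise after sorting the index lists increasingly. -/
def MonLE (g h : Mon n) : Prop :=
  ∃ h' ⊆ h, h'.card = g.card ∧
    List.Forall₂ (· ≤ ·) (Finset.sort g (· ≤ ·)) (Finset.sort h' (· ≤ ·))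

/-- `C(I)` is a decreasing monomial code. -/
def DecMonCode (I : Set (Mon n)) : Prop := ∀ h ∈ I, ∀ g, MonLE g h → g ∈ I

/-- The monomial code `C(I)`: the `F_2`-span of `{ev(g) : g ∈ I}`. -/
def code (I : Set (Mon n)) : Set (BF n) := ↑(Submodule.span (ZMod 2) (evm '' I))

/-- An element `(A,b)` of `LTA(n,2)`: `A` lower triangular with unit diagonal. -/
structure LTA (n : ℕ) where
  A : Matrix (Fin n) (Fin n) (ZMod 2)
  b : Pt n
  diag : ∀ i, A i i = 1
  lower : ∀ i j : Fin n, i < j → A i j = 0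

/-- The affine map `x ↦ Ax + b` on points. -/
def LTA.actPt (L : LTA n) (x : Pt n) : Pt n := L.A.mulVec x + L.b

/-- The action of `(A,b)` on `R_n` (equivalently on `F_2^N`):
`((A,b)·f)(x) = f(Ax+b)`, so that `(A,b)·ev(f) = ev((A,b)·f)`. -/
def LTA.act (L : LTA n) (f : BF n) : BF n := fun x => f (L.actPt x)

/-- Hamming weight. -/
def wt (f : BF n) : ℕ := (Finset.univ.filter (fun x => f x ≠ 0)).card

/-- Weight distribution of a set of vectors: `d ↦ |{x ∈ S : wt x = d}|`. -/
noncomputable def wdist (S : Set (BF n)) : ℕ → ℕ := fun d => Nat.card {x : BF n // x ∈ S ∧ wt x = d}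

/-- Membership in the subgroup `LTA(n,2)_{h2}^{h1}`: all strictly-lower-triangular entries of
`A` and all entries of `b` vanish except possibly the free parameters: for
`f ∈ O_{h1}∖O_{h2}∖D`, the entry `a_{s,t}` when `h1 = q·x_s`, `f = q·x_t`, `t < s`, and the
entry `b_r` when `h1 = f·x_r`; for `f ∈ O_{h2}∖O_{h1}∖D`, the entry `a_{s,t}` when
`h2 = q·x_s`, `f = q·x_t`, `t < s`, and the entry `b_r` when `h2 = f·x_r`. -/
def InSub (h1 h2 : Mon n) (O1 O2 D : Set (Mon n)) (L : LTA n) : Prop :=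
  (∀ s t : Fin n, t < s → L.A s t ≠ 0 →
    (∃ f ∈ ((O1 \ O2) \ D), ∃ q : Mon n, s ∉ q ∧ t ∉ q ∧ h1 = insert s q ∧ f = insert t q) ∨
    (∃ f ∈ ((O2 \ O1) \ D), ∃ q : Mon n, s ∉ q ∧ t ∉ q ∧ h2 = insert s q ∧ f = insert t q)) ∧
  (∀ r : Fin n, L.b r ≠ 0 →
    (∃ f ∈ ((O1 \ O2) \ D), r ∉ f ∧ h1 = insert r f) ∨
    (∃ f ∈ ((O2 \ O1) \ D), r ∉ f ∧ h2 = insert r f))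

/-- The standing context: a decreasing monomial code `C(I)` with `n ≥ 1`, last frozen index
`τ = max F` where `F = {0,…,N−1} ∖ {[g] : g ∈ I}`; `h1` the monomial of `I` of smallest row
index; `h2` the monomial of `I` of smallest row index among those with `[h1] < [h2]` that are
not one-variable descendants of `h1`; and the feasibility assumption
`|ind(h1)∖ind(h2)| ≤ 2`, `|ind(h2)∖ind(h1)| ≤ 2`. -/
structure Setup (n : ℕ) where
  npos : 1 ≤ n
  I : Set (Mon n)
  dec : DecMonCode I
  τ : ℕ
  τlt : τ < 2 ^ n
  τfrozen : τ ∉ rowIdx '' I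
  τmax : ∀ m < 2 ^ n, m ∉ rowIdx '' I → m ≤ τ
  h1 : Mon n
  h1mem : h1 ∈ I
  h1min : ∀ g ∈ I, rowIdx h1 ≤ rowIdx g
  h2 : Mon n
  h2mem : h2 ∈ I
  h12 : rowIdx h1 < rowIdx h2
  h2novd : ¬ Ovd h2 h1
  h2min : ∀ g ∈ I, rowIdx h1 < rowIdx g → ¬ Ovd g h1 → rowIdx h2 ≤ rowIdx g
  feas1 : (h1 \ h2).card ≤ 2
  feas2 : (h2 \ h1).card ≤ 2

namespace Setup

variable (C : Setup n)

/-- `O_{h1} = {f ∈ I : f ≺_o h1, [h2] < [f] < τ}`. -/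
def O1 : Set (Mon n) := {f | f ∈ C.I ∧ Ovd f C.h1 ∧ rowIdx C.h2 < rowIdx f ∧ rowIdx f < C.τ}

/-- `O_{h2} = {f ∈ I : f ≺_o h2, [f] < τ}`. -/
def O2 : Set (Mon n) := {f | f ∈ C.I ∧ Ovd f C.h2 ∧ rowIdx f < C.τ}

/-- `O^c_{h1} = {f ∈ I : f ∉ O_{h1}, [h2] < [f] < τ}`. -/
def O1c : Set (Mon n) := {f | f ∈ C.I ∧ f ∉ C.O1 ∧ rowIdx C.h2 < rowIdx f ∧ rowIdx f < C.τ}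

/-- `O^c_{h2} = {f ∈ I : f ∉ O_{h2}, [h2] < [f] < τ}`. -/
def O2c : Set (Mon n) := {f | f ∈ C.I ∧ f ∉ C.O2 ∧ rowIdx C.h2 < rowIdx f ∧ rowIdx f < C.τ}

/-- `D = {f ∈ O_{h1} ∪ O_{h2} : ∏_{j ∈ ind(h1)∩ind(h2)} x_j ∤ f}`. -/
def D : Set (Mon n) := {f | f ∈ C.O1 ∪ C.O2 ∧ ¬ (C.h1 ∩ C.h2 ⊆ f)}

/-- `T = {f ∈ I : [f] > τ}`. -/
def T : Set (Mon n) := {f | f ∈ C.I ∧ C.τ < rowIdx f}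

/-- `B = ((O_{h2}∖O_{h1}) ∩ D) ∪ (O^c_{h1} ∩ O^c_{h2}) ∪ T`. -/
def B : Set (Mon n) := ((C.O2 \ C.O1) ∩ C.D) ∪ (C.O1c ∩ C.O2c) ∪ C.T

/-- `(A,b) ∈ LTA(n,2)_{h2}^{h1}`. -/
def Mem (L : LTA n) : Prop := InSub C.h1 C.h2 C.O1 C.O2 C.D L

/-- `W = {g ∈ O^c_{h1} ∩ O^c_{h2} : ∃ (A,b) ∈ LTA(n,2)_{h2}^{h1}, ∃ p ∈ O_{h1}∖O_{h2}∖D,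
⟨(A,b)·g⟩_p ≠ 0}`. -/
def W : Set (Mon n) :=
  {g | g ∈ C.O1c ∩ C.O2c ∧
    ∃ L : LTA n, C.Mem L ∧ ∃ p ∈ ((C.O1 \ C.O2) \ C.D), mcoeff (L.act (evm g)) p ≠ 0}

/-- `L` and `L'` have equal values on all entries associated with `O_{h2}∖O_{h1}∖D`
in the definition of the subgroup `LTA(n,2)_{h2}^{h1}`. -/
def agreeO2 (L L' : LTA n) : Prop :=
  (∀ f ∈ ((C.O2 \ C.O1) \ C.D), ∀ (q : Mon n) (s t : Fin n),
      s ∉ q → t ∉ q → t < s → C.h2 = insert s q → f = insert t q → L.A s t = L'.A s t) ∧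
  (∀ f ∈ ((C.O2 \ C.O1) \ C.D), ∀ r : Fin n, r ∉ f → C.h2 = insert r f → L.b r = L'.b r)

end Setup

/-! On the subcube `{x : supp x ⊆ f}`, over which `⟨g⟩_f` sums `g`, substituting `x ↦ Ax + b`
in the coordinates of a set `P ⊆ f` only is a unitriangular bijection of the subcube, so it
preserves every coefficient `⟨evm S⟩_f = [S = f]`. Membership in `LTA(n,2)_{h2}^{h1}` forces
`a_{s,j} = 0` whenever `s ∉ ind(h2)` and `j ∈ ind(h1)`, and `f ∉ D` gives
`ind(h1) ∩ ind(h2) ⊆ ind(f)`. Hence on the subcube the extra factor of `(A,b)·h1` is the constant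
`b_r`, resp. the form `a_{s,t} x_t + b_s`, and `(A,b)·h1` agrees there with `b_r·f`,
resp. `a_{s,t}·f + b_s·q`, transported by such a substitution. -/

open Function

theorem injective_of_unitriangular {ι R : Type*} [LinearOrder ι] [WellFoundedLT ι] [AddGroup R]
    {φ : (ι → R) → ι → R}
    (hφ : ∀ i x y, (∀ j < i, x j = y j) → φ x i - x i = φ y i - y i) : Injective φ := by
  intro x y hxy
  funext i
  induction i using WellFoundedLT.induction with
  | _ i ih => simpa [hxy] using hφ i x y ih

theorem evm_insert {i : Fin n} {S : Mon n} (hi : i ∉ S) (x : Pt n) :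
    evm (insert i S) x = x i * evm S x :=
  prod_insert hi

theorem mcoeff_congr {g g' : BF n} {S : Mon n}
    (h : ∀ x : Pt n, (∀ i ∉ S, x i = 0) → g x = g' x) : mcoeff g S = mcoeff g' S :=
  sum_congr rfl fun x hx => h x (mem_filter.1 hx).2

theorem mcoeff_add (g g' : BF n) (S : Mon n) : mcoeff (g + g') S = mcoeff g S + mcoeff g' S :=
  sum_add_distrib

theorem mcoeff_smul (c : ZMod 2) (g : BF n) (S : Mon n) : mcoeff (c • g) S = c * mcoeff g S :=
  (mul_sum _ _ _).symm

theorem mcoeff_comp_of_injective {φ : Pt n → Pt n} (hφ : Injective φ) {S : Mon n}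
    (hmaps : ∀ x : Pt n, (∀ i ∉ S, x i = 0) → ∀ i ∉ S, φ x i = 0) (g : BF n) :
    mcoeff (g ∘ φ) S = mcoeff g S := by
  set cube := univ.filter fun x : Pt n => ∀ i ∉ S, x i = 0
  have hmem : ∀ x, x ∈ cube ↔ ∀ i ∉ S, x i = 0 := by simp [cube]
  have himage : cube.image φ = cube :=
    eq_of_subset_of_card_le (image_subset_iff.2 fun x hx => (hmem _).2 (hmaps x ((hmem x).1 hx)))
      (card_image_of_injective _ hφ).ge
  show ∑ x ∈ cube, g (φ x) = ∑ x ∈ cube, g x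
  rw [← sum_image hφ.injOn, himage]

theorem mcoeff_evm (S T : Mon n) : mcoeff (evm S) T = if S = T then 1 else 0 := by
  have hcube : ∀ x ∈ univ.filter (fun x : Pt n => ∀ i ∉ T, x i = 0), ∀ i ∉ T, x i = 0 :=
    fun x hx => (mem_filter.1 hx).2
  split_ifs with hST
  · subst hST
    have hind : S.piecewise 1 0 ∈ univ.filter fun x : Pt n => ∀ i ∉ S, x i = 0 :=
      mem_filter.2 ⟨mem_univ _, fun i hi => piecewise_eq_of_notMem _ _ _ hi⟩
    refine (sum_eq_single_of_mem _ hind fun x hx hne => ?_).trans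
      (prod_eq_one fun i hi => piecewise_eq_of_mem _ _ _ hi)
    contrapose! hne
    funext i
    by_cases hi : i ∈ S
    · have hbool : ∀ a : ZMod 2, a ≠ 0 → a = 1 := by decide
      rw [piecewise_eq_of_mem _ _ _ hi, Pi.one_apply]
      exact hbool _ (prod_ne_zero_iff.1 hne i hi)
    · rw [piecewise_eq_of_notMem _ _ _ hi, hcube x hx i hi, Pi.zero_apply]
  by_cases hsub : S ⊆ T
  · obtain ⟨M, hMT, hMS⟩ := exists_of_ssubset (ssubset_of_subset_of_ne hsub hST)
    have hflip : ∀ x : Pt n, evm S (update x M (x M + 1)) = evm S x := fun x =>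
      prod_congr rfl fun i hi => update_of_ne (ne_of_mem_of_not_mem hi hMS) _ _
    refine sum_involution (fun x _ => update x M (x M + 1))
      (fun x _ => by rw [hflip, CharTwo.add_self_eq_zero]) (fun x _ _ h => ?_)
      (fun x hx => ?_) (fun x _ => by simp [update_idem, add_assoc, CharTwo.add_self_eq_zero])
    · simpa using congrFun h M
    · simp only [mem_filter, mem_univ, true_and]
      intro i hi
      rw [update_of_ne (ne_of_mem_of_not_mem hMT hi).symm, hcube x hx i hi]
  · obtain ⟨i, hiS, hiT⟩ := not_subset.1 hsub
    exact sum_eq_zero fun x hx => prod_eq_zero hiS (hcube x hx i hiT)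

namespace LTA

variable (L : LTA n)

theorem actPt_apply (x : Pt n) (i : Fin n) :
    L.actPt x i = x i + (L.b i + ∑ j with j < i, L.A i j * x j) := by
  have hrest : ∑ j with ¬ j < i, L.A i j * x j = x i := by
    refine (sum_eq_single_of_mem i (by simp) fun j hj hji => ?_).trans (by rw [L.diag, one_mul])
    rw [L.lower i j (lt_of_le_of_ne (not_lt.1 (mem_filter.1 hj).2) hji.symm), zero_mul]
  rw [LTA.actPt, Pi.add_apply, Matrix.mulVec, dotProduct,
    ← sum_filter_add_sum_filter_not univ (· < i), hrest]
  ring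

theorem actPt_apply_of_support_subset {f : Mon n} {x : Pt n} (hx : ∀ j ∉ f, x j = 0) {i : Fin n}
    (hi : i ∉ f) : L.actPt x i = L.b i + ∑ j ∈ f with j < i, L.A i j * x j := by
  rw [actPt_apply, hx i hi, zero_add]
  congr 1
  refine (sum_subset (filter_subset_filter _ (subset_univ f)) fun j hj hjf => ?_).symm
  rw [hx j fun h => hjf (mem_filter.2 ⟨h, (mem_filter.1 hj).2⟩), mul_zero]

def actPtOn (P : Mon n) (x : Pt n) : Pt n := P.piecewise (L.actPt x) x

theorem actPtOn_of_mem {P : Mon n} {i : Fin n} (hi : i ∈ P) (x : Pt n) :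
    L.actPtOn P x i = L.actPt x i :=
  piecewise_eq_of_mem _ _ _ hi

theorem actPtOn_of_notMem {P : Mon n} {i : Fin n} (hi : i ∉ P) (x : Pt n) :
    L.actPtOn P x i = x i :=
  piecewise_eq_of_notMem _ _ _ hi

theorem evm_comp_actPtOn_self (P : Mon n) (x : Pt n) :
    evm P (L.actPtOn P x) = ∏ i ∈ P, L.actPt x i :=
  prod_congr rfl fun _ hi => L.actPtOn_of_mem hi x

theorem injective_actPtOn (P : Mon n) : Injective (L.actPtOn P) :=
  injective_of_unitriangular fun i x y hxy => by
    by_cases hi : i ∈ P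
    · simp only [L.actPtOn_of_mem hi, actPt_apply, add_sub_cancel_left]
      exact congrArg _ (sum_congr rfl fun j hj => by rw [hxy j (mem_filter.1 hj).2])
    · simp [L.actPtOn_of_notMem hi]

theorem mcoeff_evm_comp_actPtOn {P f : Mon n} (hPf : P ⊆ f) (S : Mon n) :
    mcoeff (evm S ∘ L.actPtOn P) f = if S = f then 1 else 0 := by
  rw [← mcoeff_evm]
  refine mcoeff_comp_of_injective (L.injective_actPtOn P) (fun x hx i hi => ?_) _
  rw [L.actPtOn_of_notMem fun h => hi (hPf h), hx i hi]

theorem mcoeff_act_evm_insert {r : Fin n} {f : Mon n} (hrf : r ∉ f)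
    (hA : ∀ j ∈ f, j < r → L.A r j = 0) :
    mcoeff (L.act (evm (insert r f))) f = L.b r := by
  have hsplit : ∀ x : Pt n, (∀ i ∉ f, x i = 0) →
      L.act (evm (insert r f)) x = (L.b r • evm f ∘ L.actPtOn f) x := by
    intro x hx
    have hr : L.actPt x r = L.b r := by
      rw [L.actPt_apply_of_support_subset hx hrf,
        sum_eq_zero fun j hj => by rw [hA j (mem_filter.1 hj).1 (mem_filter.1 hj).2, zero_mul],
        add_zero]
    rw [act, evm_insert hrf, hr, Pi.smul_apply, comp_apply, smul_eq_mul, evm_comp_actPtOn_self,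
      evm]
  rw [mcoeff_congr hsplit, mcoeff_smul, L.mcoeff_evm_comp_actPtOn subset_rfl, if_pos rfl, mul_one]

theorem mcoeff_act_evm_insert_insert {s t : Fin n} {q : Mon n} (hsq : s ∉ q) (htq : t ∉ q)
    (hts : t < s) (hA : ∀ j ∈ q, j < s → L.A s j = 0) :
    mcoeff (L.act (evm (insert s q))) (insert t q) = L.A s t := by
  have hsplit : ∀ x : Pt n, (∀ i ∉ insert t q, x i = 0) → L.act (evm (insert s q)) x =
      (L.A s t • evm (insert t q) ∘ L.actPtOn q + L.b s • evm q ∘ L.actPtOn q) x := by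
    intro x hx
    have hs : L.actPt x s = L.A s t * x t + L.b s := by
      have hst : s ∉ insert t q := by simp [hts.ne', hsq]
      rw [L.actPt_apply_of_support_subset hx hst, add_comm, sum_eq_single_of_mem t (by simp [hts])]
      intro j hj hjt
      obtain ⟨hjtq, hjs⟩ := mem_filter.1 hj
      rw [hA j ((mem_insert.1 hjtq).resolve_left hjt) hjs, zero_mul]
    simp only [act, Pi.add_apply, Pi.smul_apply, comp_apply, smul_eq_mul, evm_insert hsq,
      evm_insert htq, hs, L.actPtOn_of_notMem htq, evm_comp_actPtOn_self]
    rw [evm]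
    ring
  rw [mcoeff_congr hsplit, mcoeff_add, mcoeff_smul, mcoeff_smul,
    L.mcoeff_evm_comp_actPtOn (subset_insert t q), L.mcoeff_evm_comp_actPtOn (subset_insert t q),
    if_pos rfl, if_neg (insert_ne_self.2 htq).symm, mul_one, mul_zero, add_zero]

end LTA

theorem Setup.Mem.entry_eq_zero {C : Setup n} {L : LTA n} (hL : C.Mem L) {s j : Fin n}
    (hs : s ∉ C.h2) (hj : j ∈ C.h1) (hjs : j < s) : L.A s j = 0 := by
  by_contra hne
  rcases hL.1 s j hjs hne with ⟨-, -, q, -, hjq, hh1, -⟩ | ⟨-, -, q, -, -, hh2, -⟩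
  · rw [hh1, mem_insert] at hj
    exact hj.elim hjs.ne hjq
  · exact hs (hh2 ▸ mem_insert_self s q)

/-- for `(A,b) ∈ LTA(n,2)_{h2}^{h1}` and `f ∈ O_{h1}∖O_{h2}∖D`, the
coefficient `⟨(A,b)·h1⟩_f` equals the corresponding free parameter: `b_r` if `h1 = f·x_r`,
and `a_{s,t}` if `h1 = q·x_s`, `f = q·x_t` with `t < s`. -/
theorem stmt4 {n : ℕ} (C : Setup n) (L : LTA n) (hL : C.Mem L)
    (f : Mon n) (hf : f ∈ ((C.O1 \ C.O2) \ C.D)) :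
    (∀ r : Fin n, r ∉ f → C.h1 = insert r f → mcoeff (L.act (evm C.h1)) f = L.b r) ∧
    (∀ (q : Mon n) (s t : Fin n), s ∉ q → t ∉ q → t < s →
      C.h1 = insert s q → f = insert t q → mcoeff (L.act (evm C.h1)) f = L.A s t) := by
  obtain ⟨⟨hfO1, -⟩, hfD⟩ := hf
  have hcap : C.h1 ∩ C.h2 ⊆ f := by_contra fun h => hfD ⟨Or.inl hfO1, h⟩
  have hnot2 : ∀ s ∈ C.h1, s ∉ f → s ∉ C.h2 := fun s hs1 hsf hs2 =>
    hsf (hcap (mem_inter.2 ⟨hs1, hs2⟩))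
  refine ⟨fun r hrf hh1 => ?_, fun q s t hsq htq hts hh1 hfq => ?_⟩
  · have hr2 := hnot2 r (hh1 ▸ mem_insert_self r f) hrf
    have hA : ∀ j ∈ f, j < r → L.A r j = 0 := fun j hj =>
      hL.entry_eq_zero hr2 (hh1 ▸ mem_insert_of_mem hj)
    rw [hh1]
    exact L.mcoeff_act_evm_insert hrf hA
  · have hs2 := hnot2 s (hh1 ▸ mem_insert_self s q) (by simp [hfq, hts.ne', hsq])
    have hA : ∀ j ∈ q, j < s → L.A s j = 0 := fun j hj =>
      hL.entry_eq_zero hs2 (hh1 ▸ mem_insert_of_mem hj)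
    rw [hh1, hfq]
    exact L.mcoeff_act_evm_insert_insert hsq htq hts hA
end

section
/- For every (A,b) ∈ LTA(n,2)_{h2}^{h1}, the coefficient of (A,b)·h2 vanishes at every monomial in (O_{h1}∖O_{h2})∩D, in (O_{h2}∖O_{h1})∩D, and in O_{h1}∩O_{h2}; that is, ⟨(A,b)·h2⟩_f = 0 for all f ∈ ((O_{h1}∖O_{h2})∩D) ∪ ((O_{h2}∖O_{h1})∩D) ∪ (O_{h1}∩O_{h2}). -/
open Finset

variable {n : ℕ}

/-! The coefficient `⟨(A,b)·h2⟩_f` is the sum of `∏_{i ∈ h2} (Ax+b)_i` over the points `x`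
supported in `f`. It vanishes either because one factor vanishes at all these points (a row of
`(A,b)` that is trivial on `f`), or because the summand is invariant under a translation by a
nonzero vector supported in `f`, so that the points cancel in pairs. The membership
`(A,b) ∈ LTA(n,2)_{h2}^{h1}` makes the rows of `A` indexed by `h2` trivial on `h2` and
forbids exactly the entries that would break these arguments for `f ∈ O_{h1}` or `f ∉ D`. -/

theorem mcoeff_eq_zero_of_forall {g : BF n} {f : Mon n}
    (hg : ∀ x : Pt n, (∀ i ∉ f, x i = 0) → g x = 0) : mcoeff g f = 0 :=
  Finset.sum_eq_zero fun x hx => hg x (Finset.mem_filter.1 hx).2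

theorem mcoeff_eq_zero_of_add_periodic {g : BF n} {f : Mon n} {v : Pt n} {t : Fin n}
    (hvt : v t ≠ 0) (hvf : ∀ i ∉ f, v i = 0) (hg : ∀ x, g (x + v) = g x) :
    mcoeff g f = 0 := by
  refine Finset.sum_involution (fun x _ => x + v) (fun x _ => ?_) (fun x _ _ hx => ?_)
    (fun x hx => ?_) (fun x _ => ?_)
  · rw [hg, CharTwo.add_self_eq_zero (g x)]
  · exact hvt (by simpa using congrFun hx t)
  · simp only [Finset.mem_filter, Finset.mem_univ, true_and] at hx ⊢
    intro i hi
    rw [Pi.add_apply, hx i hi, hvf i hi, add_zero]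
  · funext i
    rw [Pi.add_apply, Pi.add_apply, add_assoc, CharTwo.add_self_eq_zero, add_zero]

theorem LTA.actPt_apply_eq_zero (L : LTA n) {f : Mon n} {i : Fin n} (hb : L.b i = 0)
    (hA : ∀ t ∈ f, L.A i t = 0) {x : Pt n} (hx : ∀ t ∉ f, x t = 0) : L.actPt x i = 0 := by
  rw [LTA.actPt, Pi.add_apply, hb, add_zero, Matrix.mulVec, dotProduct]
  refine Finset.sum_eq_zero fun t _ => ?_
  by_cases ht : t ∈ f
  · rw [hA t ht, zero_mul]
  · rw [hx t ht, mul_zero]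

theorem LTA.mcoeff_act_evm_eq_zero_of_row (L : LTA n) {S f : Mon n} {i : Fin n} (hi : i ∈ S)
    (hb : L.b i = 0) (hA : ∀ t ∈ f, L.A i t = 0) : mcoeff (L.act (evm S)) f = 0 :=
  mcoeff_eq_zero_of_forall fun _ hx =>
    Finset.prod_eq_zero hi (L.actPt_apply_eq_zero hb hA hx)

theorem LTA.act_evm_add_of_mulVec_eq_zero (L : LTA n) {S : Mon n} {v : Pt n}
    (hv : ∀ i ∈ S, L.A.mulVec v i = 0) (x : Pt n) :
    L.act (evm S) (x + v) = L.act (evm S) x := by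
  refine Finset.prod_congr rfl fun i hi => ?_
  rw [LTA.actPt, LTA.actPt, Matrix.mulVec_add, Pi.add_apply, Pi.add_apply, Pi.add_apply,
    hv i hi, add_zero]

/-- On the rows in `S`, column `t` of `A` equals `A` applied to the restriction of that column
to `S`. -/
theorem Matrix.mulVec_single_sub_eq_zero {ι R : Type*} [Fintype ι] [DecidableEq ι] [Ring R]
    (A : Matrix ι ι R) {S : Finset ι} (hdiag : ∀ i ∈ S, A i i = 1)
    (hoff : ∀ i ∈ S, ∀ j ∈ S, j ≠ i → A i j = 0) (t : ι) :
    ∀ i ∈ S, A.mulVec (Pi.single t 1 - fun j => if j ∈ S then A j t else 0) i = 0 := by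
  intro i hi
  have hsum : A.mulVec (fun j => if j ∈ S then A j t else 0) i = A i t := by
    simp only [Matrix.mulVec, dotProduct, mul_ite, mul_zero, Finset.sum_ite_mem,
      Finset.univ_inter]
    rw [Finset.sum_eq_single_of_mem i hi fun j hj hji => by rw [hoff i hi j hj hji, zero_mul],
      hdiag i hi, one_mul]
  rw [Matrix.mulVec_sub, Pi.sub_apply, hsum, Matrix.mulVec_single_one, Matrix.col_apply,
    sub_self]

namespace Setup

variable {C : Setup n} {L : LTA n}

theorem inter_subset_of_notMem_D {f : Mon n} (hf : f ∈ C.O1 ∪ C.O2) (hD : f ∉ C.D) :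
    C.h1 ∩ C.h2 ⊆ f :=
  not_not.1 fun h => hD ⟨hf, h⟩

theorem Mem.of_A_ne_zero (hL : C.Mem L) {s t : Fin n} (hs : s ∈ C.h2) (hts : t ≠ s)
    (hA : L.A s t ≠ 0) : t ∉ C.h2 ∧ insert t (C.h2.erase s) ∈ (C.O2 \ C.O1) \ C.D := by
  have hlt : t < s := (lt_or_gt_of_ne hts).resolve_right fun hst => hA (L.lower s t hst)
  rcases hL.1 s t hlt hA with ⟨f, hf, q, hsq, htq, hh1, rfl⟩ | ⟨f, hf, q, hsq, htq, hh2, rfl⟩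
  · have hsf := inter_subset_of_notMem_D (Or.inl hf.1.1) hf.2
      (Finset.mem_inter.2 ⟨hh1 ▸ Finset.mem_insert_self s q, hs⟩)
    rcases Finset.mem_insert.1 hsf with h | h
    · exact absurd h.symm hts
    · exact absurd h hsq
  · rw [hh2, Finset.erase_insert hsq]
    exact ⟨by simp [hts, htq], hf⟩

theorem Mem.of_b_ne_zero (hL : C.Mem L) {r : Fin n} (hr : r ∈ C.h2) (hb : L.b r ≠ 0) :
    C.h2.erase r ∈ (C.O2 \ C.O1) \ C.D := by
  rcases hL.2 r hb with ⟨f, hf, hrf, hh1⟩ | ⟨f, hf, hrf, hh2⟩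
  · exact absurd (inter_subset_of_notMem_D (Or.inl hf.1.1) hf.2
      (Finset.mem_inter.2 ⟨hh1 ▸ Finset.mem_insert_self r f, hr⟩)) hrf
  · rwa [hh2, Finset.erase_insert hrf]

theorem Mem.A_eq_zero_of_mem_h2 (hL : C.Mem L) {i t : Fin n} (hi : i ∈ C.h2) (ht : t ∈ C.h2)
    (hti : t ≠ i) : L.A i t = 0 :=
  not_not.1 fun hA => (hL.of_A_ne_zero hi hti hA).1 ht

theorem Mem.A_eq_zero_of_mem_inter (hL : C.Mem L) {j t : Fin n} (hj : j ∈ C.h1 ∩ C.h2)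
    (htj : t ≠ j) : L.A j t = 0 := by
  by_contra hA
  have hf := (hL.of_A_ne_zero (Finset.mem_inter.1 hj).2 htj hA).2
  rcases Finset.mem_insert.1 (inter_subset_of_notMem_D (Or.inr hf.1.1) hf.2 hj) with h | h
  · exact htj h.symm
  · exact Finset.notMem_erase j C.h2 h

theorem Mem.b_eq_zero_of_mem_inter (hL : C.Mem L) {j : Fin n} (hj : j ∈ C.h1 ∩ C.h2) :
    L.b j = 0 := by
  by_contra hb
  have hf := hL.of_b_ne_zero (Finset.mem_inter.1 hj).2 hb
  exact Finset.notMem_erase j C.h2 (inter_subset_of_notMem_D (Or.inr hf.1.1) hf.2 hj)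

theorem mcoeff_act_h2_eq_zero_of_not_inter_subset (hL : C.Mem L) {f : Mon n}
    (hf : ¬ C.h1 ∩ C.h2 ⊆ f) : mcoeff (L.act (evm C.h2)) f = 0 := by
  obtain ⟨j, hj, hjf⟩ := Finset.not_subset.1 hf
  exact L.mcoeff_act_evm_eq_zero_of_row (Finset.mem_inter.1 hj).2 (hL.b_eq_zero_of_mem_inter hj)
    fun t ht => hL.A_eq_zero_of_mem_inter hj (ne_of_mem_of_not_mem ht hjf)

theorem mcoeff_act_h2_eq_zero_of_insert (hL : C.Mem L) {f : Mon n} (hf : f ∈ C.O1) {i : Fin n}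
    (hif : i ∉ f) (hh2 : C.h2 = insert i f) : mcoeff (L.act (evm C.h2)) f = 0 := by
  have hi : i ∈ C.h2 := hh2 ▸ Finset.mem_insert_self i f
  have hb : L.b i = 0 := not_not.1 fun hb => by
    have h := hL.of_b_ne_zero hi hb
    rw [hh2, Finset.erase_insert hif] at h
    exact h.1.2 hf
  exact L.mcoeff_act_evm_eq_zero_of_row hi hb fun t ht =>
    hL.A_eq_zero_of_mem_h2 hi (hh2 ▸ Finset.mem_insert_of_mem ht) (ne_of_mem_of_not_mem ht hif)

theorem mcoeff_act_h2_eq_zero_of_substitution (hL : C.Mem L) {f q : Mon n} (hf : f ∈ C.O1)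
    {s t : Fin n} (hsq : s ∉ q) (htq : t ∉ q) (hts : t < s) (hh2 : C.h2 = insert s q)
    (hfq : f = insert t q) : mcoeff (L.act (evm C.h2)) f = 0 := by
  have hs : s ∈ C.h2 := hh2 ▸ Finset.mem_insert_self s q
  have ht : t ∉ C.h2 := by simp [hh2, hts.ne, htq]
  have hAst : L.A s t = 0 := not_not.1 fun hA => by
    have h := (hL.of_A_ne_zero hs hts.ne hA).2
    rw [hh2, Finset.erase_insert hsq, ← hfq] at h
    exact h.1.2 hf
  -- translating by `e_t - Σ_{j ∈ h2} a_{j,t} e_j` leaves every factor `(Ax+b)_i`, `i ∈ h2`, fixed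
  set v : Pt n := Pi.single t 1 - fun j => if j ∈ C.h2 then L.A j t else 0
  have hvt : v t ≠ 0 := by simp [v, ht]
  have hvf : ∀ i ∉ f, v i = 0 := by
    intro i hi
    have hit : i ≠ t := by rintro rfl; simp [hfq] at hi
    by_cases hih2 : i ∈ C.h2
    · obtain rfl : i = s := by
        simp only [hh2, hfq, Finset.mem_insert, hit, false_or] at hih2 hi
        exact hih2.resolve_right hi
      simp [v, hit, hAst]
    · simp [v, hit, hih2]
  exact mcoeff_eq_zero_of_add_periodic hvt hvf <| L.act_evm_add_of_mulVec_eq_zero <|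
    L.A.mulVec_single_sub_eq_zero (fun i _ => L.diag i)
      (fun i hi j hj hji => hL.A_eq_zero_of_mem_h2 hi hj hji) t

end Setup

/-- for `(A,b) ∈ LTA(n,2)_{h2}^{h1}`, the coefficient of `(A,b)·h2` vanishes
at every monomial of `((O_{h1}∖O_{h2})∩D) ∪ ((O_{h2}∖O_{h1})∩D) ∪ (O_{h1}∩O_{h2})`. -/
theorem stmt7 {n : ℕ} (C : Setup n) (L : LTA n) (hL : C.Mem L) :
    ∀ f ∈ (((C.O1 \ C.O2) ∩ C.D) ∪ ((C.O2 \ C.O1) ∩ C.D) ∪ (C.O1 ∩ C.O2)),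
      mcoeff (L.act (evm C.h2)) f = 0 := by
  rintro f ((⟨-, -, hD⟩ | ⟨-, -, hD⟩) | ⟨hf1, -, hovd, -⟩)
  · exact Setup.mcoeff_act_h2_eq_zero_of_not_inter_subset hL hD
  · exact Setup.mcoeff_act_h2_eq_zero_of_not_inter_subset hL hD
  · rcases hovd with ⟨i, hif, hh2⟩ | ⟨q, s, t, hsq, htq, hts, hh2, hfq⟩
    · exact Setup.mcoeff_act_h2_eq_zero_of_insert hL hf1 hif hh2
    · exact Setup.mcoeff_act_h2_eq_zero_of_substitution hL hf1 hsq htq hts hh2 hfq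
end
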